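/- The converse of EXT is provable in GCI extended with Tennant's classical rules: for all formulas φ,ψ, the sequent τxφ(x)=τxψ(x) ⇒ ∀x(φ(x)↔ψ(x)) is provable in that calculus. -/
import Mathlib


mutual
/-- Terms: bound variables, parameters, and complex terms `τxφ` formed by a
unary term-forming operator binding a variable in a formula. -/
inductive Tm : Type
  | var : ℕ → Tm
  | par : ℕ → Tm
  | tau : ℕ → Fm → Tm

/-- Formulas: atomic formulas (unary/binary predicates and identity) closed
under ¬, ∧, ∨, →, ↔, ∀, ∃. -/
inductive Fm : Type
  | pred1 : ℕ → Tm → Fm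
  | pred2 : ℕ → Tm → Tm → Fm
  | eq : Tm → Tm → Fm
  | neg : Fm → Fm
  | and : Fm → Fm → Fm
  | or : Fm → Fm → Fm
  | imp : Fm → Fm → Fm
  | iff : Fm → Fm → Fm
  | all : ℕ → Fm → Fm
  | ex : ℕ → Fm → Fm
end

/-- The membership atom `t ∈ t'` (the binary predicate with index 0). -/
def memF (t t' : Tm) : Fm := Fm.pred2 0 t t'

mutual
/-- Substitution of the term `u` for the bound variable `x` in a term. -/
def substT (x : ℕ) (u : Tm) : Tm → Tm
  | .var y => if y = x then u else .var y
  | .par a => .par a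
  | .tau y φ => if y = x then .tau y φ else .tau y (substF x u φ)

/-- Substitution `φ[x/u]` of the term `u` for the bound variable `x` in a formula. -/
def substF (x : ℕ) (u : Tm) : Fm → Fm
  | .pred1 n t => .pred1 n (substT x u t)
  | .pred2 n t t' => .pred2 n (substT x u t) (substT x u t')
  | .eq t t' => .eq (substT x u t) (substT x u t')
  | .neg φ => .neg (substF x u φ)
  | .and φ ψ => .and (substF x u φ) (substF x u ψ)
  | .or φ ψ => .or (substF x u φ) (substF x u ψ)
  | .imp φ ψ => .imp (substF x u φ) (substF x u ψ)
  | .iff φ ψ => .iff (substF x u φ) (substF x u ψ)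
  | .all y φ => if y = x then .all y φ else .all y (substF x u φ)
  | .ex y φ => if y = x then .ex y φ else .ex y (substF x u φ)
end

mutual
/-- Substitution of the parameter `b₂` for the parameter `b₁` in a term. -/
def substPT (b₁ b₂ : ℕ) : Tm → Tm
  | .var y => .var y
  | .par a => if a = b₁ then .par b₂ else .par a
  | .tau y φ => .tau y (substPF b₁ b₂ φ)

/-- Substitution `φ[b₁/b₂]` of the parameter `b₂` for the parameter `b₁` in a formula. -/
def substPF (b₁ b₂ : ℕ) : Fm → Fm
  | .pred1 n t => .pred1 n (substPT b₁ b₂ t)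
  | .pred2 n t t' => .pred2 n (substPT b₁ b₂ t) (substPT b₁ b₂ t')
  | .eq t t' => .eq (substPT b₁ b₂ t) (substPT b₁ b₂ t')
  | .neg φ => .neg (substPF b₁ b₂ φ)
  | .and φ ψ => .and (substPF b₁ b₂ φ) (substPF b₁ b₂ ψ)
  | .or φ ψ => .or (substPF b₁ b₂ φ) (substPF b₁ b₂ ψ)
  | .imp φ ψ => .imp (substPF b₁ b₂ φ) (substPF b₁ b₂ ψ)
  | .iff φ ψ => .iff (substPF b₁ b₂ φ) (substPF b₁ b₂ ψ)
  | .all y φ => .all y (substPF b₁ b₂ φ)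
  | .ex y φ => .ex y (substPF b₁ b₂ φ)
end

mutual
/-- Occurrence of the parameter `a` in a term. -/
def pOccT (a : ℕ) : Tm → Bool
  | .var _ => false
  | .par b => b == a
  | .tau _ φ => pOccF a φ

/-- Occurrence of the parameter `a` in a formula. -/
def pOccF (a : ℕ) : Fm → Bool
  | .pred1 _ t => pOccT a t
  | .pred2 _ t t' => pOccT a t || pOccT a t'
  | .eq t t' => pOccT a t || pOccT a t'
  | .neg φ => pOccF a φ
  | .and φ ψ => pOccF a φ || pOccF a ψ
  | .or φ ψ => pOccF a φ || pOccF a ψ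
  | .imp φ ψ => pOccF a φ || pOccF a ψ
  | .iff φ ψ => pOccF a φ || pOccF a ψ
  | .all _ φ => pOccF a φ
  | .ex _ φ => pOccF a φ
end

mutual
/-- Occurrence (free, bound or as a binder) of the variable `x` in a term. -/
def vOccT (x : ℕ) : Tm → Bool
  | .var y => y == x
  | .par _ => false
  | .tau y φ => y == x || vOccF x φ

/-- Occurrence (free, bound or as a binder) of the variable `x` in a formula. -/
def vOccF (x : ℕ) : Fm → Bool
  | .pred1 _ t => vOccT x t
  | .pred2 _ t t' => vOccT x t || vOccT x t'
  | .eq t t' => vOccT x t || vOccT x t'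
  | .neg φ => vOccF x φ
  | .and φ ψ => vOccF x φ || vOccF x ψ
  | .or φ ψ => vOccF x φ || vOccF x ψ
  | .imp φ ψ => vOccF x φ || vOccF x ψ
  | .iff φ ψ => vOccF x φ || vOccF x ψ
  | .all y φ => y == x || vOccF x φ
  | .ex y φ => y == x || vOccF x φ
end

/-- The parameter `a` is fresh for (does not occur in) the formula `φ`. -/
def FreshF (a : ℕ) (φ : Fm) : Prop := pOccF a φ = false

/-- The parameter `a` is fresh for the term `t`. -/
def FreshT (a : ℕ) (t : Tm) : Prop := pOccT a t = false

/-- The parameter `a` is fresh for every formula of the multiset `Γ`. -/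
def FreshM (a : ℕ) (Γ : Multiset Fm) : Prop := ∀ φ ∈ Γ, pOccF a φ = false

/-- Atomic formulas. -/
def Atomic : Fm → Prop
  | .pred1 _ _ => True
  | .pred2 _ _ _ => True
  | .eq _ _ => True
  | _ => False

/-- The constraints that a stratification assignment `σ` must satisfy on a formula:
for every membership atom `t ∈ t'` we need `σ t' = σ t + 1` and for every identity
atom `t = t'` we need `σ t = σ t'`. -/
def stratOK (σ : Tm → ℤ) : Fm → Prop
  | .pred2 0 t t' => σ t' = σ t + 1
  | .eq t t' => σ t = σ t'
  | .neg φ => stratOK σ φ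
  | .and φ ψ => stratOK σ φ ∧ stratOK σ ψ
  | .or φ ψ => stratOK σ φ ∧ stratOK σ ψ
  | .imp φ ψ => stratOK σ φ ∧ stratOK σ ψ
  | .iff φ ψ => stratOK σ φ ∧ stratOK σ ψ
  | .all _ φ => stratOK σ φ
  | .ex _ φ => stratOK σ φ
  | _ => True

/-- A formula is stratified if some integer assignment satisfies all its
atomic constraints. -/
def Stratified (φ : Fm) : Prop := ∃ σ : Tm → ℤ, stratOK σ φ

/-- Flags selecting the rules of the various sequent calculi considered. -/
structure Flags where
  /-- the rule (Cut) -/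
  cut : Bool := true
  /-- pure variant: (∀⇒),(⇒∃) restricted to instantiation by parameters -/
  pure : Bool := false
  /-- the rule (Ref) -/
  ref : Bool := false
  /-- the rule (2LL) for atomic formulas -/
  ll2 : Bool := false
  /-- the rule (Ext) -/
  ext : Bool := false
  /-- the rule (AV) -/
  av : Bool := false
  /-- the rule (ExtAV) -/
  extav : Bool := false
  /-- the rule (a⇒) -/
  aIntro : Bool := false
  /-- axiomatic sequents ⇒EXT -/
  axEXT : Bool := false
  /-- axiomatic sequents ⇒AV -/
  axAV : Bool := false
  /-- axiomatic sequents ⇒EXTAV -/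
  axEXTAV : Bool := false
  /-- Tennant's classical rules (⇒τ),(τ⇒) for the given relation `R` -/
  tenn : Option (Tm → Tm → Fm) := none
  /-- axiomatic sequents for both halves of the Hintikka axiom for the given `R` -/
  axHA : Option (Tm → Tm → Fm) := none
  /-- the NF rules (⇒=) and (=⇒) -/
  eqNF : Bool := false
  /-- the NF rules (Abs⇒) and (⇒Abs) -/
  abs : Bool := false
  /-- the rule (3LL) for ∈-atoms -/
  ll3 : Bool := false
  /-- the GTNF rules (⇒:) and (:⇒) -/
  colon : Bool := false
  /-- the rule (2LL') for ∈-atoms -/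
  ll2' : Bool := false
  /-- the rule (3LL') for =-atoms -/
  ll3' : Bool := false
  /-- axiomatic sequents of the axiomatic system for NF -/
  axNF : Bool := false

/-- `Dh F n Γ Δ` : the sequent `Γ ⇒ Δ` has a proof of height at most `n` in the
sequent calculus determined by the flags `F`. -/
inductive Dh (F : Flags) : ℕ → Multiset Fm → Multiset Fm → Prop
  | ax : ∀ n φ Γ Δ, Dh F (n+1) (φ ::ₘ Γ) (φ ::ₘ Δ)
  | cut : ∀ n φ Γ Δ Γ' Δ', F.cut = true →
      Dh F n Γ (φ ::ₘ Δ) → Dh F n (φ ::ₘ Γ') Δ' → Dh F (n+1) (Γ + Γ') (Δ + Δ')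
  | wL : ∀ n φ Γ Δ, Dh F n Γ Δ → Dh F (n+1) (φ ::ₘ Γ) Δ
  | wR : ∀ n φ Γ Δ, Dh F n Γ Δ → Dh F (n+1) Γ (φ ::ₘ Δ)
  | cL : ∀ n φ Γ Δ, Dh F n (φ ::ₘ φ ::ₘ Γ) Δ → Dh F (n+1) (φ ::ₘ Γ) Δ
  | cR : ∀ n φ Γ Δ, Dh F n Γ (φ ::ₘ φ ::ₘ Δ) → Dh F (n+1) Γ (φ ::ₘ Δ)
  | negL : ∀ n φ Γ Δ, Dh F n Γ (φ ::ₘ Δ) → Dh F (n+1) (Fm.neg φ ::ₘ Γ) Δ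
  | negR : ∀ n φ Γ Δ, Dh F n (φ ::ₘ Γ) Δ → Dh F (n+1) Γ (Fm.neg φ ::ₘ Δ)
  | andL : ∀ n φ ψ Γ Δ, Dh F n (φ ::ₘ ψ ::ₘ Γ) Δ → Dh F (n+1) (Fm.and φ ψ ::ₘ Γ) Δ
  | andR : ∀ n φ ψ Γ Δ, Dh F n Γ (φ ::ₘ Δ) → Dh F n Γ (ψ ::ₘ Δ) →
      Dh F (n+1) Γ (Fm.and φ ψ ::ₘ Δ)
  | orL : ∀ n φ ψ Γ Δ, Dh F n (φ ::ₘ Γ) Δ → Dh F n (ψ ::ₘ Γ) Δ →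
      Dh F (n+1) (Fm.or φ ψ ::ₘ Γ) Δ
  | orR : ∀ n φ ψ Γ Δ, Dh F n Γ (φ ::ₘ ψ ::ₘ Δ) → Dh F (n+1) Γ (Fm.or φ ψ ::ₘ Δ)
  | impL : ∀ n φ ψ Γ Δ, Dh F n Γ (φ ::ₘ Δ) → Dh F n (ψ ::ₘ Γ) Δ →
      Dh F (n+1) (Fm.imp φ ψ ::ₘ Γ) Δ
  | impR : ∀ n φ ψ Γ Δ, Dh F n (φ ::ₘ Γ) (ψ ::ₘ Δ) → Dh F (n+1) Γ (Fm.imp φ ψ ::ₘ Δ)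
  | iffL : ∀ n φ ψ Γ Δ, Dh F n Γ (φ ::ₘ ψ ::ₘ Δ) → Dh F n (φ ::ₘ ψ ::ₘ Γ) Δ →
      Dh F (n+1) (Fm.iff φ ψ ::ₘ Γ) Δ
  | iffR : ∀ n φ ψ Γ Δ, Dh F n (φ ::ₘ Γ) (ψ ::ₘ Δ) → Dh F n (ψ ::ₘ Γ) (φ ::ₘ Δ) →
      Dh F (n+1) Γ (Fm.iff φ ψ ::ₘ Δ)
  | allL : ∀ n x φ t Γ Δ, (F.pure = true → ∃ a, t = Tm.par a) →
      Dh F n (substF x t φ ::ₘ Γ) Δ → Dh F (n+1) (Fm.all x φ ::ₘ Γ) Δ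
  | exR : ∀ n x φ t Γ Δ, (F.pure = true → ∃ a, t = Tm.par a) →
      Dh F n Γ (substF x t φ ::ₘ Δ) → Dh F (n+1) Γ (Fm.ex x φ ::ₘ Δ)
  | allR : ∀ n x φ a Γ Δ, FreshF a φ → FreshM a Γ → FreshM a Δ →
      Dh F n Γ (substF x (Tm.par a) φ ::ₘ Δ) → Dh F (n+1) Γ (Fm.all x φ ::ₘ Δ)
  | exL : ∀ n x φ a Γ Δ, FreshF a φ → FreshM a Γ → FreshM a Δ →
      Dh F n (substF x (Tm.par a) φ ::ₘ Γ) Δ → Dh F (n+1) (Fm.ex x φ ::ₘ Γ) Δ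
  | ref : ∀ n t Γ Δ, F.ref = true → Dh F n (Fm.eq t t ::ₘ Γ) Δ → Dh F (n+1) Γ Δ
  | ll2 : ∀ n x φ t₁ t₂ Γ Δ, F.ll2 = true → Atomic φ →
      Dh F n Γ (Fm.eq t₁ t₂ ::ₘ Δ) → Dh F n Γ (substF x t₁ φ ::ₘ Δ) →
      Dh F (n+1) Γ (substF x t₂ φ ::ₘ Δ)
  | ext : ∀ n x φ ψ a Γ Δ, F.ext = true →
      FreshF a φ → FreshF a ψ → FreshM a Γ → FreshM a Δ →
      Dh F n (substF x (Tm.par a) φ ::ₘ Γ) (substF x (Tm.par a) ψ ::ₘ Δ) →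
      Dh F n (substF x (Tm.par a) ψ ::ₘ Γ) (substF x (Tm.par a) φ ::ₘ Δ) →
      Dh F (n+1) Γ (Fm.eq (Tm.tau x φ) (Tm.tau x ψ) ::ₘ Δ)
  | av : ∀ n x y φ Γ Δ, F.av = true → vOccF y φ = false →
      Dh F n (Fm.eq (Tm.tau x φ) (Tm.tau y (substF x (Tm.var y) φ)) ::ₘ Γ) Δ →
      Dh F (n+1) Γ Δ
  | extav : ∀ n x y φ ψ a b Γ Δ, F.extav = true → x ≠ y → a ≠ b →
      FreshF a φ → FreshF a ψ → FreshM a Γ → FreshM a Δ →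
      FreshF b φ → FreshF b ψ → FreshM b Γ → FreshM b Δ →
      Dh F n (Fm.eq (Tm.par a) (Tm.par b) ::ₘ substF x (Tm.par a) φ ::ₘ Γ)
        (substF y (Tm.par b) ψ ::ₘ Δ) →
      Dh F n (Fm.eq (Tm.par a) (Tm.par b) ::ₘ substF y (Tm.par b) ψ ::ₘ Γ)
        (substF x (Tm.par a) φ ::ₘ Δ) →
      Dh F (n+1) Γ (Fm.eq (Tm.tau x φ) (Tm.tau y ψ) ::ₘ Δ)
  | aIntro : ∀ n x φ a Γ Δ, F.aIntro = true → FreshF a φ → FreshM a Γ → FreshM a Δ →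
      Dh F n (Fm.eq (Tm.par a) (Tm.tau x φ) ::ₘ Γ) Δ → Dh F (n+1) Γ Δ
  | axEXT : ∀ n x φ ψ, F.axEXT = true →
      Dh F (n+1) 0 {Fm.imp (Fm.all x (Fm.iff φ ψ)) (Fm.eq (Tm.tau x φ) (Tm.tau x ψ))}
  | axAV : ∀ n x y φ, F.axAV = true → vOccF y φ = false →
      Dh F (n+1) 0 {Fm.eq (Tm.tau x φ) (Tm.tau y (substF x (Tm.var y) φ))}
  | axEXTAV : ∀ n x y φ ψ, F.axEXTAV = true → x ≠ y →
      Dh F (n+1) 0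
        {Fm.imp (Fm.all x (Fm.all y (Fm.imp (Fm.eq (Tm.var x) (Tm.var y)) (Fm.iff φ ψ))))
          (Fm.eq (Tm.tau x φ) (Tm.tau y ψ))}
  | tauR : ∀ n R x φ t a Γ Δ, F.tenn = some R → FreshF a φ → FreshM a Γ → FreshM a Δ →
      Dh F n (substF x (Tm.par a) φ ::ₘ Γ) (R (Tm.par a) t ::ₘ Δ) →
      Dh F n (R (Tm.par a) t ::ₘ Γ) (substF x (Tm.par a) φ ::ₘ Δ) →
      Dh F (n+1) Γ (Fm.eq t (Tm.tau x φ) ::ₘ Δ)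
  | tauL1 : ∀ n R x φ t b Γ Δ, F.tenn = some R →
      Dh F n Γ (substF x (Tm.par b) φ ::ₘ Δ) → Dh F n (R (Tm.par b) t ::ₘ Γ) Δ →
      Dh F (n+1) (Fm.eq t (Tm.tau x φ) ::ₘ Γ) Δ
  | tauL2 : ∀ n R x φ t b Γ Δ, F.tenn = some R →
      Dh F n Γ (R (Tm.par b) t ::ₘ Δ) → Dh F n (substF x (Tm.par b) φ ::ₘ Γ) Δ →
      Dh F (n+1) (Fm.eq t (Tm.tau x φ) ::ₘ Γ) Δ
  | axHA1 : ∀ n R x φ t, F.axHA = some R →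
      Dh F (n+1) {Fm.eq t (Tm.tau x φ)} {Fm.all x (Fm.iff φ (R (Tm.var x) t))}
  | axHA2 : ∀ n R x φ t, F.axHA = some R →
      Dh F (n+1) {Fm.all x (Fm.iff φ (R (Tm.var x) t))} {Fm.eq t (Tm.tau x φ)}
  | eqNFR : ∀ n t t' a Γ Δ, F.eqNF = true →
      FreshT a t → FreshT a t' → FreshM a Γ → FreshM a Δ →
      Dh F n (memF (Tm.par a) t ::ₘ Γ) (memF (Tm.par a) t' ::ₘ Δ) →
      Dh F n (memF (Tm.par a) t' ::ₘ Γ) (memF (Tm.par a) t ::ₘ Δ) →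
      Dh F (n+1) Γ (Fm.eq t t' ::ₘ Δ)
  | eqNFL : ∀ n t t' b Γ Δ, F.eqNF = true →
      Dh F n Γ (memF (Tm.par b) t ::ₘ memF (Tm.par b) t' ::ₘ Δ) →
      Dh F n (memF (Tm.par b) t ::ₘ memF (Tm.par b) t' ::ₘ Γ) Δ →
      Dh F (n+1) (Fm.eq t t' ::ₘ Γ) Δ
  | absL : ∀ n x φ t Γ Δ, F.abs = true → Stratified φ →
      Dh F n (substF x t φ ::ₘ Γ) Δ → Dh F (n+1) (memF t (Tm.tau x φ) ::ₘ Γ) Δ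
  | absR : ∀ n x φ t Γ Δ, F.abs = true → Stratified φ →
      Dh F n Γ (substF x t φ ::ₘ Δ) → Dh F (n+1) Γ (memF t (Tm.tau x φ) ::ₘ Δ)
  | ll3a : ∀ n t t' t'' Γ Δ, F.ll3 = true →
      Dh F n Γ (Fm.eq t t' ::ₘ Δ) → Dh F n Γ (memF t'' t ::ₘ Δ) →
      Dh F n (memF t'' t' ::ₘ Γ) Δ → Dh F (n+1) Γ Δ
  | ll3b : ∀ n t t' t'' Γ Δ, F.ll3 = true →
      Dh F n Γ (Fm.eq t t' ::ₘ Δ) → Dh F n Γ (memF t t'' ::ₘ Δ) →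
      Dh F n (memF t' t'' ::ₘ Γ) Δ → Dh F (n+1) Γ Δ
  | colonR : ∀ n x φ t a Γ Δ, F.colon = true → Stratified φ →
      FreshF a φ → FreshM a Γ → FreshM a Δ →
      Dh F n (substF x (Tm.par a) φ ::ₘ Γ) (memF (Tm.par a) t ::ₘ Δ) →
      Dh F n (memF (Tm.par a) t ::ₘ Γ) (substF x (Tm.par a) φ ::ₘ Δ) →
      Dh F (n+1) Γ (Fm.eq t (Tm.tau x φ) ::ₘ Δ)
  | colonL1 : ∀ n x φ t b Γ Δ, F.colon = true → Stratified φ →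
      Dh F n Γ (substF x (Tm.par b) φ ::ₘ Δ) → Dh F n (memF (Tm.par b) t ::ₘ Γ) Δ →
      Dh F (n+1) (Fm.eq t (Tm.tau x φ) ::ₘ Γ) Δ
  | colonL2 : ∀ n x φ t b Γ Δ, F.colon = true → Stratified φ →
      Dh F n Γ (memF (Tm.par b) t ::ₘ Δ) → Dh F n (substF x (Tm.par b) φ ::ₘ Γ) Δ →
      Dh F (n+1) (Fm.eq t (Tm.tau x φ) ::ₘ Γ) Δ
  | ll2'a : ∀ n t t' t'' Γ Δ, F.ll2' = true →
      Dh F n Γ (Fm.eq t t' ::ₘ Δ) → Dh F n Γ (memF t'' t ::ₘ Δ) →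
      Dh F (n+1) Γ (memF t'' t' ::ₘ Δ)
  | ll2'b : ∀ n t t' t'' Γ Δ, F.ll2' = true →
      Dh F n Γ (Fm.eq t t' ::ₘ Δ) → Dh F n Γ (memF t t'' ::ₘ Δ) →
      Dh F (n+1) Γ (memF t' t'' ::ₘ Δ)
  | ll3' : ∀ n t t' t'' Γ Δ, F.ll3' = true →
      Dh F n Γ (Fm.eq t t' ::ₘ Δ) → Dh F n Γ (Fm.eq t t'' ::ₘ Δ) →
      Dh F n (Fm.eq t' t'' ::ₘ Γ) Δ → Dh F (n+1) Γ Δ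
  | axNF1 : ∀ n x y φ, F.axNF = true → Stratified φ →
      Dh F (n+1) 0 {Fm.all x (Fm.iff (memF (Tm.var x) (Tm.tau y φ)) (substF y (Tm.var x) φ))}
  | axNF2 : ∀ n x y z, F.axNF = true → x ≠ y → x ≠ z → y ≠ z →
      Dh F (n+1) 0
        {Fm.all x (Fm.all y (Fm.all z (Fm.imp (Fm.eq (Tm.var x) (Tm.var y))
          (Fm.imp (memF (Tm.var x) (Tm.var z)) (memF (Tm.var y) (Tm.var z))))))}
  | axNF3 : ∀ n x y z, F.axNF = true → x ≠ y → x ≠ z → y ≠ z →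
      Dh F (n+1) 0
        {Fm.all x (Fm.all y (Fm.iff (Fm.eq (Tm.var x) (Tm.var y))
          (Fm.all z (Fm.iff (memF (Tm.var z) (Tm.var x)) (memF (Tm.var z) (Tm.var y))))))}

/-- Provability of the sequent `Γ ⇒ Δ` in the calculus determined by `F`. -/
def Proves (F : Flags) (Γ Δ : Multiset Fm) : Prop := ∃ n, Dh F n Γ Δ

/-- GC: classical first-order sequent calculus. -/
def GC : Flags := {}

/-- GCI: GC with the identity rules (Ref) and (2LL). -/
def GCI : Flags := { ref := true, ll2 := true }

/-- GPCI: the pure variant of GCI. -/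
def GPCI : Flags := { pure := true, ref := true, ll2 := true }

/-- GS: GPCI + (Ext) + (AV) + (a⇒). -/
def GS : Flags := { pure := true, ref := true, ll2 := true, ext := true, av := true, aIntro := true }

/-- GS': GPCI + (ExtAV) + (a⇒). -/
def GS' : Flags := { pure := true, ref := true, ll2 := true, extav := true, aIntro := true }

/-- GSNF: GPC + (⇒=) + (=⇒) + (Abs⇒) + (⇒Abs) + (3LL). -/
def GSNF : Flags := { pure := true, eqNF := true, abs := true, ll3 := true }

/-- GTNF: GPC + (⇒:) + (:⇒) + (Ref) + (2LL') + (3LL'). -/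
def GTNF : Flags := { pure := true, colon := true, ref := true, ll2' := true, ll3' := true }

/-- The axiomatic sequent system for NF: GC + the NF axiomatic sequents. -/
def NFax : Flags := { axNF := true }

/-- GCI with Tennant's classical rules for the relation R. -/
def GCT : Flags := { GCI with tenn := some (Fm.pred2 0) }

theorem Dh.mono_succ {F : Flags} {n : ℕ} {Γ Δ : Multiset Fm} (h : Dh F n Γ Δ) :
    Dh F (n+1) Γ Δ := by
  induction h with
  | ax => apply Dh.ax
  | cut => apply Dh.cut <;> assumption
  | wL => apply Dh.wL <;> assumption
  | wR => apply Dh.wR <;> assumption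
  | cL => apply Dh.cL <;> assumption
  | cR => apply Dh.cR <;> assumption
  | negL => apply Dh.negL <;> assumption
  | negR => apply Dh.negR <;> assumption
  | andL => apply Dh.andL <;> assumption
  | andR => apply Dh.andR <;> assumption
  | orL => apply Dh.orL <;> assumption
  | orR => apply Dh.orR <;> assumption
  | impL => apply Dh.impL <;> assumption
  | impR => apply Dh.impR <;> assumption
  | iffL => apply Dh.iffL <;> assumption
  | iffR => apply Dh.iffR <;> assumption
  | allL => apply Dh.allL <;> assumption
  | exR => apply Dh.exR <;> assumption
  | allR => apply Dh.allR <;> assumption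
  | exL => apply Dh.exL <;> assumption
  | ref => apply Dh.ref <;> assumption
  | ll2 => apply Dh.ll2 <;> assumption
  | ext => apply Dh.ext <;> assumption
  | av => apply Dh.av <;> assumption
  | extav => apply Dh.extav <;> assumption
  | aIntro => apply Dh.aIntro <;> assumption
  | axEXT => apply Dh.axEXT <;> assumption
  | axAV => apply Dh.axAV <;> assumption
  | axEXTAV => apply Dh.axEXTAV <;> assumption
  | tauR => apply Dh.tauR <;> assumption
  | tauL1 => apply Dh.tauL1 <;> assumption
  | tauL2 => apply Dh.tauL2 <;> assumption
  | axHA1 => apply Dh.axHA1 <;> assumption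
  | axHA2 => apply Dh.axHA2 <;> assumption
  | eqNFR => apply Dh.eqNFR <;> assumption
  | eqNFL => apply Dh.eqNFL <;> assumption
  | absL => apply Dh.absL <;> assumption
  | absR => apply Dh.absR <;> assumption
  | ll3a => apply Dh.ll3a <;> assumption
  | ll3b => apply Dh.ll3b <;> assumption
  | colonR => apply Dh.colonR <;> assumption
  | colonL1 => apply Dh.colonL1 <;> assumption
  | colonL2 => apply Dh.colonL2 <;> assumption
  | ll2'a => apply Dh.ll2'a <;> assumption
  | ll2'b => apply Dh.ll2'b <;> assumption
  | ll3' n t t' t'' Γ Δ hf h1 h2 h3 ih1 ih2 ih3 => exact Dh.ll3' _ t t' t'' _ _ hf ih1 ih2 ih3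
  | axNF1 => apply Dh.axNF1 <;> assumption
  | axNF2 => apply Dh.axNF2 <;> assumption
  | axNF3 => apply Dh.axNF3 <;> assumption

theorem Dh.mono {F : Flags} {n m : ℕ} {Γ Δ : Multiset Fm} (h : Dh F n Γ Δ) (hnm : n ≤ m) :
    Dh F m Γ Δ := by
  induction hnm with
  | refl => exact h
  | step _ ih => exact ih.mono_succ
mutual
/-- Max parameter in a term. -/
def maxParT : Tm → ℕ
  | .var _ => 0
  | .par b => b
  | .tau _ χ => maxParF χ
/-- Max parameter in a formula. -/
def maxParF : Fm → ℕ
  | .pred1 _ t => maxParT t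
  | .pred2 _ t t' => max (maxParT t) (maxParT t')
  | .eq t t' => max (maxParT t) (maxParT t')
  | .neg χ => maxParF χ
  | .and χ ρ => max (maxParF χ) (maxParF ρ)
  | .or χ ρ => max (maxParF χ) (maxParF ρ)
  | .imp χ ρ => max (maxParF χ) (maxParF ρ)
  | .iff χ ρ => max (maxParF χ) (maxParF ρ)
  | .all _ χ => maxParF χ
  | .ex _ χ => maxParF χ
end

mutual
theorem pOccT_eq_false_of_gt : ∀ (t : Tm) (a : ℕ), maxParT t < a → pOccT a t = false
  | .var _, a, _ => rfl
  | .par b, a, h => by simp [pOccT, maxParT] at *; omega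
  | .tau _ χ, a, h => pOccF_eq_false_of_gt χ a h
theorem pOccF_eq_false_of_gt : ∀ (χ : Fm) (a : ℕ), maxParF χ < a → pOccF a χ = false
  | .pred1 _ t, a, h => pOccT_eq_false_of_gt t a h
  | .pred2 _ t t', a, h => by
      simp [pOccF, maxParF] at *
      exact ⟨pOccT_eq_false_of_gt t a (by omega), pOccT_eq_false_of_gt t' a (by omega)⟩
  | .eq t t', a, h => by
      simp [pOccF, maxParF] at *
      exact ⟨pOccT_eq_false_of_gt t a (by omega), pOccT_eq_false_of_gt t' a (by omega)⟩
  | .neg χ, a, h => pOccF_eq_false_of_gt χ a h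
  | .and χ ρ, a, h => by
      simp [pOccF, maxParF] at *
      exact ⟨pOccF_eq_false_of_gt χ a (by omega), pOccF_eq_false_of_gt ρ a (by omega)⟩
  | .or χ ρ, a, h => by
      simp [pOccF, maxParF] at *
      exact ⟨pOccF_eq_false_of_gt χ a (by omega), pOccF_eq_false_of_gt ρ a (by omega)⟩
  | .imp χ ρ, a, h => by
      simp [pOccF, maxParF] at *
      exact ⟨pOccF_eq_false_of_gt χ a (by omega), pOccF_eq_false_of_gt ρ a (by omega)⟩
  | .iff χ ρ, a, h => by
      simp [pOccF, maxParF] at *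
      exact ⟨pOccF_eq_false_of_gt χ a (by omega), pOccF_eq_false_of_gt ρ a (by omega)⟩
  | .all _ χ, a, h => pOccF_eq_false_of_gt χ a h
  | .ex _ χ, a, h => pOccF_eq_false_of_gt χ a h
end

/-- From χ(a) derive aRτxχ. -/
theorem tenn_mem_of (x a : ℕ) (χ : Fm) :
    Dh GCT 3 {substF x (Tm.par a) χ} {Fm.pred2 0 (Tm.par a) (Tm.tau x χ)} := by
  have p1 : Dh GCT 1 ({substF x (Tm.par a) χ} : Multiset Fm)
      (substF x (Tm.par a) χ ::ₘ {Fm.pred2 0 (Tm.par a) (Tm.tau x χ)}) :=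
    Dh.ax 0 _ 0 _
  have p2 : Dh GCT 1 (Fm.pred2 0 (Tm.par a) (Tm.tau x χ) ::ₘ {substF x (Tm.par a) χ})
      ({Fm.pred2 0 (Tm.par a) (Tm.tau x χ)} : Multiset Fm) :=
    Dh.ax 0 _ _ 0
  have h2 := Dh.tauL1 1 (Fm.pred2 0) x χ (Tm.tau x χ) a _ _ rfl p1 p2
  exact Dh.ref 2 (Tm.tau x χ) _ _ rfl h2

/-- From aRτxχ derive χ(a). -/
theorem tenn_of_mem (x a : ℕ) (χ : Fm) :
    Dh GCT 3 {Fm.pred2 0 (Tm.par a) (Tm.tau x χ)} {substF x (Tm.par a) χ} := by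
  have p1 : Dh GCT 1 ({Fm.pred2 0 (Tm.par a) (Tm.tau x χ)} : Multiset Fm)
      (Fm.pred2 0 (Tm.par a) (Tm.tau x χ) ::ₘ {substF x (Tm.par a) χ}) :=
    Dh.ax 0 _ 0 _
  have p2 : Dh GCT 1 (substF x (Tm.par a) χ ::ₘ {Fm.pred2 0 (Tm.par a) (Tm.tau x χ)})
      ({substF x (Tm.par a) χ} : Multiset Fm) :=
    Dh.ax 0 _ _ 0
  have h2 := Dh.tauL2 1 (Fm.pred2 0) x χ (Tm.tau x χ) a _ _ rfl p1 p2
  exact Dh.ref 2 (Tm.tau x χ) _ _ rfl h2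

/-- 2LL for membership atoms: t₁ = t₂, aRt₁ ⇒ aRt₂. -/
theorem ll2_mem (a : ℕ) (t1 t2 : Tm) :
    Dh GCT 2 (Fm.eq t1 t2 ::ₘ {Fm.pred2 0 (Tm.par a) t1}) {Fm.pred2 0 (Tm.par a) t2} := by
  have p1 : Dh GCT 1 (Fm.eq t1 t2 ::ₘ {Fm.pred2 0 (Tm.par a) t1})
      (Fm.eq t1 t2 ::ₘ (0 : Multiset Fm)) := Dh.ax 0 _ _ 0
  have p2 : Dh GCT 1 (Fm.eq t1 t2 ::ₘ {Fm.pred2 0 (Tm.par a) t1})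
      (Fm.pred2 0 (Tm.par a) t1 ::ₘ (0 : Multiset Fm)) := by
    rw [show (Fm.eq t1 t2 ::ₘ {Fm.pred2 0 (Tm.par a) t1})
        = Fm.pred2 0 (Tm.par a) t1 ::ₘ {Fm.eq t1 t2} by
      rw [← Multiset.cons_zero (Fm.pred2 0 (Tm.par a) t1),
        ← Multiset.cons_zero (Fm.eq t1 t2), Multiset.cons_swap]]
    exact Dh.ax 0 _ _ 0
  have h := Dh.ll2 1 0 (Fm.pred2 0 (Tm.par a) (Tm.var 0)) t1 t2 _ 0 rfl trivial
    (by simpa [substF, substT] using p1) (by simpa [substF, substT] using p2)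
  simpa [substF, substT] using h

/-- Symmetry of identity between τ-terms with the same bound variable. -/
theorem sym_eq_tau (x : ℕ) (χ ρ : Fm) :
    Dh GCT 3 {Fm.eq (Tm.tau x χ) (Tm.tau x ρ)} {Fm.eq (Tm.tau x ρ) (Tm.tau x χ)} := by
  have p1 : Dh GCT 2 ({Fm.eq (Tm.tau x χ) (Tm.tau x ρ)} : Multiset Fm)
      (Fm.eq (Tm.tau x χ) (Tm.tau x ρ) ::ₘ (0 : Multiset Fm)) :=
    Dh.mono (Dh.ax 0 _ 0 0) (by omega)
  have p2 : Dh GCT 2 ({Fm.eq (Tm.tau x χ) (Tm.tau x ρ)} : Multiset Fm)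
      (Fm.eq (Tm.tau x χ) (Tm.tau x χ) ::ₘ (0 : Multiset Fm)) := by
    have ax : Dh GCT 1 (Fm.eq (Tm.tau x χ) (Tm.tau x χ) ::ₘ {Fm.eq (Tm.tau x χ) (Tm.tau x ρ)})
        (Fm.eq (Tm.tau x χ) (Tm.tau x χ) ::ₘ (0 : Multiset Fm)) := Dh.ax 0 _ _ 0
    exact Dh.ref 1 (Tm.tau x χ) _ _ rfl ax
  have h := Dh.ll2 2 x (Fm.eq (Tm.var x) (Tm.tau x χ)) (Tm.tau x χ) (Tm.tau x ρ) _ 0 rfl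
    trivial (by simpa [substF, substT] using p1) (by simpa [substF, substT] using p2)
  simpa [substF, substT] using h

/-- One half: χ(a), τxχ = τxρ ⇒ ρ(a). -/
theorem tenn_half (x a : ℕ) (χ ρ : Fm) :
    Dh GCT 6 (substF x (Tm.par a) χ ::ₘ {Fm.eq (Tm.tau x χ) (Tm.tau x ρ)})
      {substF x (Tm.par a) ρ} := by
  have d1 : Dh GCT 4 ({substF x (Tm.par a) χ} : Multiset Fm)
      (Fm.pred2 0 (Tm.par a) (Tm.tau x χ) ::ₘ (0 : Multiset Fm)) := by
    have := tenn_mem_of x a χ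
    exact Dh.mono (by simpa using this) (by omega)
  have d3 : Dh GCT 4 (Fm.pred2 0 (Tm.par a) (Tm.tau x χ) ::ₘ {Fm.eq (Tm.tau x χ) (Tm.tau x ρ)})
      ({Fm.pred2 0 (Tm.par a) (Tm.tau x ρ)} : Multiset Fm) := by
    have := ll2_mem a (Tm.tau x χ) (Tm.tau x ρ)
    refine Dh.mono ?_ (by omega : (2:ℕ) ≤ 4)
    rwa [show (Fm.eq (Tm.tau x χ) (Tm.tau x ρ) ::ₘ {Fm.pred2 0 (Tm.par a) (Tm.tau x χ)})
        = Fm.pred2 0 (Tm.par a) (Tm.tau x χ) ::ₘ {Fm.eq (Tm.tau x χ) (Tm.tau x ρ)} by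
      rw [← Multiset.cons_zero (Fm.pred2 0 (Tm.par a) (Tm.tau x χ)),
        ← Multiset.cons_zero (Fm.eq (Tm.tau x χ) (Tm.tau x ρ)), Multiset.cons_swap]] at this
  have c1 := Dh.cut 4 (Fm.pred2 0 (Tm.par a) (Tm.tau x χ)) {substF x (Tm.par a) χ} 0
    {Fm.eq (Tm.tau x χ) (Tm.tau x ρ)} {Fm.pred2 0 (Tm.par a) (Tm.tau x ρ)} rfl d1 d3
  -- c1 : Dh GCT 5 ({χa} + {E}) (0 + {aRτρ})
  have d2 : Dh GCT 5 (Fm.pred2 0 (Tm.par a) (Tm.tau x ρ) ::ₘ (0 : Multiset Fm))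
      ({substF x (Tm.par a) ρ} : Multiset Fm) := by
    have := tenn_of_mem x a ρ
    exact Dh.mono (by simpa using this) (by omega)
  have c1' : Dh GCT 5 ({substF x (Tm.par a) χ} + {Fm.eq (Tm.tau x χ) (Tm.tau x ρ)})
      (Fm.pred2 0 (Tm.par a) (Tm.tau x ρ) ::ₘ (0 : Multiset Fm)) := by simpa using c1
  have c2 := Dh.cut 5 (Fm.pred2 0 (Tm.par a) (Tm.tau x ρ))
    ({substF x (Tm.par a) χ} + {Fm.eq (Tm.tau x χ) (Tm.tau x ρ)}) 0 0
    {substF x (Tm.par a) ρ} rfl c1' d2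
  simpa [Multiset.singleton_add] using c2
/-- The converse of EXT is provable in GCI + Tennant's classical rules. -/
theorem converse_EXT_provable (x : ℕ) (φ ψ : Fm) :
    Proves GCT {Fm.eq (Tm.tau x φ) (Tm.tau x ψ)} {Fm.all x (Fm.iff φ ψ)} := by
  set a := max (maxParF φ) (maxParF ψ) + 1 with ha
  have hfφ : pOccF a φ = false := pOccF_eq_false_of_gt φ a (by omega)
  have hfψ : pOccF a ψ = false := pOccF_eq_false_of_gt ψ a (by omega)
  have h1 : Dh GCT 7 (substF x (Tm.par a) φ ::ₘ {Fm.eq (Tm.tau x φ) (Tm.tau x ψ)})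
      (substF x (Tm.par a) ψ ::ₘ (0 : Multiset Fm)) := by
    have := tenn_half x a φ ψ
    exact Dh.mono (by simpa using this) (by omega)
  have h2' : Dh GCT 6 (Fm.eq (Tm.tau x ψ) (Tm.tau x φ) ::ₘ {substF x (Tm.par a) ψ})
      ({substF x (Tm.par a) φ} : Multiset Fm) := by
    have := tenn_half x a ψ φ
    rwa [show (substF x (Tm.par a) ψ ::ₘ {Fm.eq (Tm.tau x ψ) (Tm.tau x φ)})
        = Fm.eq (Tm.tau x ψ) (Tm.tau x φ) ::ₘ {substF x (Tm.par a) ψ} by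
      rw [← Multiset.cons_zero (substF x (Tm.par a) ψ),
        ← Multiset.cons_zero (Fm.eq (Tm.tau x ψ) (Tm.tau x φ)), Multiset.cons_swap]] at this
  have hsym : Dh GCT 6 ({Fm.eq (Tm.tau x φ) (Tm.tau x ψ)} : Multiset Fm)
      (Fm.eq (Tm.tau x ψ) (Tm.tau x φ) ::ₘ (0 : Multiset Fm)) :=
    Dh.mono (by simpa using sym_eq_tau x φ ψ) (by omega)
  have h2c := Dh.cut 6 (Fm.eq (Tm.tau x ψ) (Tm.tau x φ))
    {Fm.eq (Tm.tau x φ) (Tm.tau x ψ)} 0 {substF x (Tm.par a) ψ}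
    {substF x (Tm.par a) φ} rfl hsym h2'
  -- h2c : Dh 7 ({E} + {ψa}) (0 + {φa})
  have h2 : Dh GCT 7 (substF x (Tm.par a) ψ ::ₘ {Fm.eq (Tm.tau x φ) (Tm.tau x ψ)})
      (substF x (Tm.par a) φ ::ₘ (0 : Multiset Fm)) := by
    rw [show (substF x (Tm.par a) ψ ::ₘ {Fm.eq (Tm.tau x φ) (Tm.tau x ψ)})
        = Fm.eq (Tm.tau x φ) (Tm.tau x ψ) ::ₘ {substF x (Tm.par a) ψ} by
      rw [← Multiset.cons_zero (substF x (Tm.par a) ψ),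
        ← Multiset.cons_zero (Fm.eq (Tm.tau x φ) (Tm.tau x ψ)), Multiset.cons_swap]]
    simpa [Multiset.singleton_add] using h2c
  have hiff := Dh.iffR 7 (substF x (Tm.par a) φ) (substF x (Tm.par a) ψ)
    {Fm.eq (Tm.tau x φ) (Tm.tau x ψ)} 0 h1 h2
  have hiff' : Dh GCT 8 ({Fm.eq (Tm.tau x φ) (Tm.tau x ψ)} : Multiset Fm)
      (substF x (Tm.par a) (Fm.iff φ ψ) ::ₘ (0 : Multiset Fm)) := by
    simpa [substF] using hiff
  have hfr1 : FreshF a (Fm.iff φ ψ) := by simp [FreshF, pOccF, hfφ, hfψ]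
  have hfr2 : FreshM a {Fm.eq (Tm.tau x φ) (Tm.tau x ψ)} := by
    intro χ hχ
    simp only [Multiset.mem_singleton] at hχ
    subst hχ
    simp [pOccF, pOccT, hfφ, hfψ]
  have hfr3 : FreshM a (0 : Multiset Fm) := by intro χ hχ; simp at hχ
  have hall := Dh.allR 8 x (Fm.iff φ ψ) a {Fm.eq (Tm.tau x φ) (Tm.tau x ψ)} 0
    hfr1 hfr2 hfr3 hiff'
  exact ⟨9, by simpa using hall⟩
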